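/- Let Φ be a continuous flow on a metric space and F a closed set that is invariant under the time-1 map Φ_1 and isolated invariant for Φ_1 with isolating neighborhood W. Suppose additionally F is invariant under Φ_k for all k ∈ ℤ and for every x ∈ F there is δ > 0 such that Φ_{k+t}(x) ∈ W for all k ∈ ℤ and t ∈ [0,δ]. Then F is invariant under the full flow: Φ_t(F) = F for all t ∈ ℝ. -/

import Mathlib

/-!
Isolation turns the local hypothesis into `Φ_t x ∈ F` for `t ∈ [0, δ]`, because the whole
`Φ_1`-orbit of `Φ_t x` stays in `W`. Continuous induction on the closed set of times at which
the orbit of `x` lies in `F` makes `F` forward invariant, and invariance under the integer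
times `-n` moves every real time to a nonnegative one.
-/

open Set Filter Topology

namespace Flow

variable {α : Type*} [TopologicalSpace α] (ϕ : Flow ℝ α) {s : Set α}

theorem isForwardInvariant_of_forall_Icc (hs : IsClosed s)
    (hloc : ∀ x ∈ s, ∃ δ > 0, ∀ t ∈ Icc (0 : ℝ) δ, ϕ t x ∈ s) :
    IsForwardInvariant ϕ s := by
  intro t ht x hx
  let times : Set ℝ := (fun u => ϕ u x) ⁻¹' s
  have htimes : IsClosed (times ∩ Icc 0 t) :=
    (hs.preimage (ϕ.continuous continuous_id continuous_const)).inter isClosed_Icc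
  have hstep : ∀ u ∈ times ∩ Ico 0 t, times ∈ 𝓝[>] u := by
    rintro u ⟨hu, -⟩
    obtain ⟨δ, hδ, hδs⟩ := hloc _ hu
    filter_upwards [Icc_mem_nhdsGT (lt_add_of_pos_right u hδ)] with v hv
    have hvu : v - u ∈ Icc 0 δ := ⟨by linarith [hv.1], by linarith [hv.2]⟩
    simpa [times, ← map_add] using hδs _ hvu
  have h0 : (0 : ℝ) ∈ times := by simpa [times, map_zero_apply] using hx
  exact htimes.Icc_subset_of_forall_mem_nhdsWithin h0 hstep ⟨ht, le_rfl⟩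

theorem isInvariant_of_isForwardInvariant_of_mapsTo_neg_nat (hfwd : IsForwardInvariant ϕ s)
    (hneg : ∀ n : ℕ, MapsTo (ϕ (-n)) s s) : IsInvariant ϕ s := by
  intro t x hx
  obtain ⟨n, hn⟩ : ∃ n : ℕ, -t ≤ n := exists_nat_ge (-t)
  have hshift : ϕ t x = ϕ (t + n) (ϕ (-n) x) := by rw [← map_add, add_neg_cancel_right]
  rw [hshift]
  exact hfwd (by linarith) (hneg n hx)

end Flow

theorem time_one_isolated_implies_flow_invariant_general {X : Type*} [MetricSpace X]
    (Φ : ℝ → X → X)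
    (hΦcont : Continuous fun p : ℝ × X => Φ p.1 p.2)
    (hflow0 : ∀ x, Φ 0 x = x)
    (hflow : ∀ t s : ℝ, ∀ x, Φ (t + s) x = Φ t (Φ s x))
    (F W : Set X) (hFcl : IsClosed F)
    (hiso : ∀ x : X, (∀ k : ℤ, Φ (k : ℝ) x ∈ W) → x ∈ F)
    (hFk : ∀ k : ℤ, Φ (k : ℝ) '' F = F)
    (hδ : ∀ x ∈ F, ∃ δ > (0:ℝ), ∀ k : ℤ, ∀ t ∈ Set.Icc (0:ℝ) δ, Φ ((k : ℝ) + t) x ∈ W) :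
    ∀ t : ℝ, Φ t '' F = F := by
  let ϕ : Flow ℝ X := ⟨Φ, hΦcont, hflow, hflow0⟩
  have hloc : ∀ x ∈ F, ∃ δ > 0, ∀ t ∈ Icc (0 : ℝ) δ, ϕ t x ∈ F := by
    intro x hx
    obtain ⟨δ, hδpos, hW⟩ := hδ x hx
    exact ⟨δ, hδpos, fun t ht => hiso _ fun k => hflow k t x ▸ hW k t ht⟩
  have hneg : ∀ n : ℕ, MapsTo (ϕ (-n)) F F := fun n x hx => by
    have hFn := hFk (-n)
    push_cast at hFn
    exact hFn.subset (mem_image_of_mem _ hx)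
  exact (ϕ.isInvariant_iff_image_eq F).mp <| ϕ.isInvariant_of_isForwardInvariant_of_mapsTo_neg_nat
    (ϕ.isForwardInvariant_of_forall_Icc hFcl hloc) hneg

/-- If a closed set `F` is invariant under all integer-time maps of a flow `Φ`, is isolated
invariant for the time-1 map with isolating neighborhood `W`, and every point of `F` stays in
`W` for all times `k + t`, `k ∈ ℤ`, `t ∈ [0,δ]` for some `δ > 0`, then `F` is invariant under
the full flow. -/
theorem time_one_isolated_implies_flow_invariant {X : Type*} [MetricSpace X]
    (Φ : ℝ → X → X)
    (hΦcont : Continuous fun p : ℝ × X => Φ p.1 p.2)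
    (hflow0 : ∀ x, Φ 0 x = x)
    (hflow : ∀ t s : ℝ, ∀ x, Φ (t + s) x = Φ t (Φ s x))
    (F W : Set X) (hFcl : IsClosed F) (hWopen : IsOpen W) (hFW : F ⊆ W)
    (hiso : ∀ x : X, (∀ k : ℤ, Φ (k : ℝ) x ∈ W) → x ∈ F)
    (hFk : ∀ k : ℤ, Φ (k : ℝ) '' F = F)
    (hδ : ∀ x ∈ F, ∃ δ > (0:ℝ), ∀ k : ℤ, ∀ t ∈ Set.Icc (0:ℝ) δ, Φ ((k : ℝ) + t) x ∈ W) :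
    ∀ t : ℝ, Φ t '' F = F :=
  time_one_isolated_implies_flow_invariant_general Φ hΦcont hflow0 hflow F W hFcl hiso hFk hδ
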